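/- Set φ_i := 1 − x_i y_i. For the Poisson bracket one has, for all i, j ∈ ZMod n: {φ_i, φ_j} = 0; {x_i, φ_j} = (δ_{i,j−1} − δ_{i,j+1}) x_i x_j y_j; and {y_i, φ_j} = (δ_{i,j+1} − δ_{i,j−1}) x_j y_i y_j, where δ denotes the Kronecker delta. -/

import Mathlib

/-!
Since `φ_j` involves only `x_j` and `y_j`, the bracket `{f, φ_j}` only sees the Euler-type terms
`x_k ∂f/∂x_k` and `y_k ∂f/∂y_k` at the neighbours `k = j ± 1`. For `f = φ_i`, a function of
the product `x_i y_i`, the two kinds of terms coincide and cancel.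
-/

open MvPolynomial

/-- The Poisson bracket on polynomials in the corner coordinates `x_i, y_i`
(`Sum.inl i ↦ x_i`, `Sum.inr i ↦ y_i`), determined by
`{x_i, x_{i+1}} = -x_i x_{i+1}`, `{y_i, y_{i+1}} = y_i y_{i+1}`. -/
noncomputable def pb {n : ℕ} [NeZero n]
    (f g : MvPolynomial (ZMod n ⊕ ZMod n) ℝ) : MvPolynomial (ZMod n ⊕ ZMod n) ℝ :=
  ∑ i : ZMod n,
    (X (Sum.inl i) * X (Sum.inl (i + 1)) *
        (pderiv (Sum.inl (i + 1)) f * pderiv (Sum.inl i) g -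
          pderiv (Sum.inl i) f * pderiv (Sum.inl (i + 1)) g) +
      X (Sum.inr i) * X (Sum.inr (i + 1)) *
        (pderiv (Sum.inr i) f * pderiv (Sum.inr (i + 1)) g -
          pderiv (Sum.inr (i + 1)) f * pderiv (Sum.inr i) g))

/-- `φ_i = 1 - x_i y_i`. -/
noncomputable def phiP {n : ℕ} (i : ZMod n) : MvPolynomial (ZMod n ⊕ ZMod n) ℝ :=
  1 - X (Sum.inl i) * X (Sum.inr i)

theorem X_mul_pderiv_X {R σ : Type*} [CommSemiring R] [DecidableEq σ] (a b : σ) :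
    X a * pderiv a (X b : MvPolynomial σ R) = if b = a then X b else 0 := by
  split_ifs with h
  · simp [h]
  · simp [pderiv_X, h]

section phiP

variable {n : ℕ}

theorem pderiv_inl_phiP (k j : ZMod n) :
    pderiv (Sum.inl k) (phiP j) = if k = j then -X (Sum.inr j) else 0 := by
  split_ifs with h
  · simp [phiP, h]
  · simp [phiP, pderiv_X, h]

theorem pderiv_inr_phiP (k j : ZMod n) :
    pderiv (Sum.inr k) (phiP j) = if k = j then -X (Sum.inl j) else 0 := by
  split_ifs with h
  · simp [phiP, h]
  · simp [phiP, pderiv_X, h]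

theorem X_inl_mul_pderiv_phiP (k j : ZMod n) :
    X (Sum.inl k) * pderiv (Sum.inl k) (phiP j) =
      X (Sum.inr k) * pderiv (Sum.inr k) (phiP j) := by
  rw [pderiv_inl_phiP, pderiv_inr_phiP]
  split_ifs with h
  · subst h; ring
  · simp

theorem pb_phiP [NeZero n] (f : MvPolynomial (ZMod n ⊕ ZMod n) ℝ) (j : ZMod n) :
    pb f (phiP j) = X (Sum.inl j) * X (Sum.inr j) *
      (X (Sum.inl (j - 1)) * pderiv (Sum.inl (j - 1)) f
        - X (Sum.inl (j + 1)) * pderiv (Sum.inl (j + 1)) f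
        + X (Sum.inr (j + 1)) * pderiv (Sum.inr (j + 1)) f
        - X (Sum.inr (j - 1)) * pderiv (Sum.inr (j - 1)) f) := by
  simp only [pb, pderiv_inl_phiP, pderiv_inr_phiP, ← eq_sub_iff_add_eq, mul_sub, mul_ite, mul_zero,
    Finset.sum_add_distrib, Finset.sum_sub_distrib, Finset.sum_ite_eq', Finset.mem_univ, if_true,
    sub_add_cancel]
  ring

end phiP

theorem stmt_4 (n : ℕ) [NeZero n] (i j : ZMod n) :
    pb (phiP i) (phiP j) = 0 ∧
    pb (X (Sum.inl i)) (phiP j) =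
      ((if i = j - 1 then 1 else 0) - (if i = j + 1 then 1 else 0)) *
        (X (Sum.inl i) * X (Sum.inl j) * X (Sum.inr j)) ∧
    pb (X (Sum.inr i)) (phiP j) =
      ((if i = j + 1 then 1 else 0) - (if i = j - 1 then 1 else 0)) *
        (X (Sum.inl j) * X (Sum.inr i) * X (Sum.inr j)) := by
  refine ⟨?_, ?_, ?_⟩ <;> rw [pb_phiP]
  · simp only [X_inl_mul_pderiv_phiP]
    ring
  · simp only [X_mul_pderiv_X, Sum.inl.injEq, reduceCtorEq, if_false]
    split_ifs <;> ring
  · simp only [X_mul_pderiv_X, Sum.inr.injEq, reduceCtorEq, if_false]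
    split_ifs <;> ring
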